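/- Let A, N, α, β ∈ ℕ with N ≥ 1 and β ≤ A; set a = A/2 and b = a + N. Then for all n, t ∈ {0, …, N−1}, with s = a + t, the two families of q-Racah polynomials are connected by: ũ_{N−1−n}^{α,β}(x(s),a,b)_q = (−1)^{t−n} · ([t+β]_q! [N+α−t−1]_q! [A+N+α+t]_q! [A+N−β−n−1]_q!) / ([A−β+t]_q! [α+n]_q! [β+n]_q! [A+N+α+n]_q!) · u_n^{α,β}(x(s),a,b)_q. -/

import Mathlib

open Finset

/-- The symmetric q-number `[s]_q = (q^{s/2} - q^{-s/2})/(q^{1/2} - q^{-1/2})`. -/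
noncomputable def qnum (q s : ℝ) : ℝ :=
  (q ^ (s / 2) - q ^ (-s / 2)) / (q ^ ((1 : ℝ) / 2) - q ^ (-(1 : ℝ) / 2))

/-- The symmetric q-factorial `[n]_q! = ∏_{m=1}^n [m]_q`. -/
noncomputable def qfact (q : ℝ) (n : ℕ) : ℝ :=
  ∏ m ∈ Finset.range n, qnum q ((m : ℝ) + 1)

/-- The symmetric q-Pochhammer symbol `(a|q)_k = ∏_{m=0}^{k-1} [a+m]_q`. -/
noncomputable def qpoch (q a : ℝ) (k : ℕ) : ℝ :=
  ∏ m ∈ Finset.range k, qnum q (a + (m : ℝ))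

/-- The q-Racah polynomial `u_n^{α,β}(x(s),a,b)_q` on the lattice `x(s)=[s]_q[s+1]_q`. -/
noncomputable def racahU (q a b α β : ℝ) (n : ℕ) (s : ℝ) : ℝ :=
  qpoch q (a - b + 1) n * qpoch q (β + 1) n * qpoch q (a + b + α + 1) n / qfact q n *
    ∑ k ∈ Finset.range (n + 1),
      qpoch q (-(n : ℝ)) k * qpoch q (α + β + (n : ℝ) + 1) k * qpoch q (a - s) k *
          qpoch q (a + s + 1) k /
        (qpoch q 1 k * qpoch q (a - b + 1) k * qpoch q (β + 1) k *
          qpoch q (a + b + α + 1) k)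

/-- The alternative q-Racah polynomial `ũ_n^{α,β}(x(s),a,b)_q`. -/
noncomputable def racahUt (q a b α β : ℝ) (n : ℕ) (s : ℝ) : ℝ :=
  qpoch q (a - b + 1) n * qpoch q (2 * a - β + 1) n * qpoch q (a - b - α + 1) n / qfact q n *
    ∑ k ∈ Finset.range (n + 1),
      qpoch q (-(n : ℝ)) k * qpoch q (2 * a - 2 * b - α - β + (n : ℝ) + 1) k *
          qpoch q (a - s) k * qpoch q (a + s + 1) k /
        (qpoch q 1 k * qpoch q (a - b + 1) k * qpoch q (2 * a - β + 1) k *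
          qpoch q (a - b - α + 1) k)

/-- `σ(s) = [s-a]_q [s+b]_q [s+a-β]_q [b+α-s]_q`. -/
noncomputable def racahSigma (q a b α β s : ℝ) : ℝ :=
  qnum q (s - a) * qnum q (s + b) * qnum q (s + a - β) * qnum q (b + α - s)

/-- `σ(-s-1) = [s+a+1]_q [b-s-1]_q [s-a+β+1]_q [b+α+s+1]_q`. -/
noncomputable def racahSigmaM (q a b α β s : ℝ) : ℝ :=
  qnum q (s + a + 1) * qnum q (b - s - 1) * qnum q (s - a + β + 1) * qnum q (b + α + s + 1)

/-- `σ̃(s) = [s-a]_q [s+b]_q [s-a+β]_q [b+α+s]_q`. -/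
noncomputable def racahSigmaT (q a b α β s : ℝ) : ℝ :=
  qnum q (s - a) * qnum q (s + b) * qnum q (s - a + β) * qnum q (b + α + s)

/-- `σ̃(-s-1) = [s+a+1]_q [b-s-1]_q [s+a-β+1]_q [b+α-s-1]_q`. -/
noncomputable def racahSigmaTM (q a b α β s : ℝ) : ℝ :=
  qnum q (s + a + 1) * qnum q (b - s - 1) * qnum q (s + a - β + 1) * qnum q (b + α - s - 1)

/-- `τ_n(s)` for the q-Racah polynomials. -/
noncomputable def racahTau (q a b α β : ℝ) (n : ℕ) (s : ℝ) : ℝ :=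
  -qnum q (α + β + 2 * (n : ℝ) + 2) * qnum q (s + (n : ℝ) / 2) * qnum q (s + (n : ℝ) / 2 + 1) +
    qnum q (a + (n : ℝ) / 2 + 1) * qnum q (b - (n : ℝ) / 2 - 1) *
      qnum q (β + (n : ℝ) / 2 + 1 - a) * qnum q (b + α + (n : ℝ) / 2 + 1) -
    qnum q (a + (n : ℝ) / 2) * qnum q (b - (n : ℝ) / 2) * qnum q (β + (n : ℝ) / 2 - a) *
      qnum q (b + α + (n : ℝ) / 2)

/-!
At the lattice point `s = a + t` both polynomials are terminating balanced `₄φ₃` series: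
`u_n` has parameters `(-n, α+β+n+1, -t, A+t+1; 1-N, β+1, A+N+α+1)` and `ũ_{N-1-n}` has
`(-(N-1-n), -N-α-β-n, -t, A+t+1; 1-N, A-β+1, 1-N-α)`. Sears' transformation of terminating
balanced `₄φ₃` series carries the first parameter set to the second, so the identity reduces to a
comparison of Pochhammer prefactors, which are all ratios of q-factorials up to sign.

Sears' transformation is proved classically: expand `(b₁-a₂)_k (b₁-a₃)_k` by the q-Pfaff–Saalschütz
sum, interchange the two summations and sum the inner series by q-Pfaff–Saalschütz again. The
q-Pfaff–Saalschütz sum itself is proved by induction on `n` with a telescoping (Zeilberger)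
certificate, which reduces to a four-term identity between q-numbers. All series are kept free of
denominators because the lower parameters `1-N` and `1-N-α` are nonpositive integers.
-/

section

variable {q : ℝ}

@[simp] lemma qnum_zero : qnum q 0 = 0 := by simp [qnum]

lemma qnum_neg (s : ℝ) : qnum q (-s) = -qnum q s := by
  unfold qnum; rw [neg_neg]; ring

lemma qnum_pos (hq0 : 0 < q) (hq1 : q ≠ 1) {s : ℝ} (hs : 0 < s) : 0 < qnum q s := by
  unfold qnum
  rcases lt_or_gt_of_ne hq1 with h | h
  · exact div_pos_of_neg_of_neg
      (sub_neg.2 (Real.rpow_lt_rpow_of_exponent_gt hq0 h (by linarith)))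
      (sub_neg.2 (Real.rpow_lt_rpow_of_exponent_gt hq0 h (by norm_num)))
  · exact div_pos
      (sub_pos.2 (Real.rpow_lt_rpow_of_exponent_lt h (by linarith)))
      (sub_pos.2 (Real.rpow_lt_rpow_of_exponent_lt h (by norm_num)))

lemma qnum_ne_zero (hq0 : 0 < q) (hq1 : q ≠ 1) {s : ℝ} (hs : s ≠ 0) : qnum q s ≠ 0 := by
  rcases hs.lt_or_gt with h | h
  · rw [← neg_neg s, qnum_neg, neg_ne_zero]
    exact (qnum_pos hq0 hq1 (neg_pos.2 h)).ne'
  · exact (qnum_pos hq0 hq1 h).ne'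

open Real in
lemma qnum_eq_exp (hq0 : 0 < q) (s : ℝ) :
    qnum q s = (exp (s * (log q / 2)) - exp (-(s * (log q / 2)))) /
      (exp (log q / 2) - exp (-(log q / 2))) := by
  simp only [qnum, rpow_def_of_pos hq0]
  ring_nf

-- In exponential form this is a Laurent polynomial identity in `exp (x * log q / 2)`, etc.
lemma qnum_four_term (hq0 : 0 < q) (x y v n k : ℝ) :
    qnum q (n + 1) * qnum q (v + n) * qnum q (x + y - n - v + k)
      + qnum q (v - x + n) * qnum q (v - y + n) * qnum q (n + 1 - k)
    = qnum q (n + 1 - k) * qnum q (x + k) * qnum q (y + k)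
      + qnum q k * qnum q (v - 1 + k) * qnum q (x + y - n - v + k) := by
  simp only [qnum_eq_exp hq0, add_mul, sub_mul, one_mul, neg_add, neg_sub, Real.exp_add,
    Real.exp_sub, Real.exp_neg]
  field_simp
  ring

@[simp] lemma qpoch_zero (a : ℝ) : qpoch q a 0 = 1 := prod_range_zero _

lemma qpoch_succ (a : ℝ) (k : ℕ) : qpoch q a (k + 1) = qpoch q a k * qnum q (a + k) :=
  prod_range_succ _ _

lemma qpoch_succ' (a : ℝ) (k : ℕ) : qpoch q a (k + 1) = qnum q a * qpoch q (a + 1) k := by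
  simp only [qpoch, prod_range_succ', Nat.cast_add, Nat.cast_one, Nat.cast_zero, add_zero]
  rw [mul_comm]
  congr 1
  exact prod_congr rfl fun m _ => by congr 1; ring

lemma qpoch_add (a : ℝ) (j i : ℕ) : qpoch q a (j + i) = qpoch q a j * qpoch q (a + j) i := by
  simp only [qpoch, prod_range_add, Nat.cast_add, add_assoc]

lemma qpoch_reflect (a : ℝ) (k : ℕ) : qpoch q a k = (-1) ^ k * qpoch q (1 - a - k) k := by
  induction k with
  | zero => simp
  | succ k ih =>
    have h₁ : 1 - a - ((k + 1 : ℕ) : ℝ) + 1 = 1 - a - k := by push_cast; ring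
    have h₂ : 1 - a - ((k + 1 : ℕ) : ℝ) = -(a + k) := by push_cast; ring
    rw [qpoch_succ, ih, qpoch_succ', h₁, h₂, qnum_neg, pow_succ]
    ring

lemma qpoch_pos (hq0 : 0 < q) (hq1 : q ≠ 1) {a : ℝ} (ha : 0 < a) (k : ℕ) : 0 < qpoch q a k :=
  prod_pos fun m _ => qnum_pos hq0 hq1 (by positivity)

lemma qpoch_ne_zero_of_nonpos (hq0 : 0 < q) (hq1 : q ≠ 1) {a : ℝ} {k : ℕ} (h : a + k ≤ 0) :
    qpoch q a k ≠ 0 :=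
  prod_ne_zero_iff.2 fun m hm => qnum_ne_zero hq0 hq1 <| by
    have : (m : ℝ) + 1 ≤ k := by exact_mod_cast mem_range.1 hm
    linarith

lemma qpoch_neg_natCast_eq_zero {m k : ℕ} (h : m < k) : qpoch q (-(m : ℝ)) k = 0 :=
  prod_eq_zero (mem_range.2 h) (by simp)

lemma qfact_eq_qpoch_one (k : ℕ) : qfact q k = qpoch q 1 k :=
  prod_congr rfl fun m _ => by rw [add_comm]

lemma qfact_pos (hq0 : 0 < q) (hq1 : q ≠ 1) (k : ℕ) : 0 < qfact q k := by
  rw [qfact_eq_qpoch_one]; exact qpoch_pos hq0 hq1 one_pos k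

lemma qfact_succ (k : ℕ) : qfact q (k + 1) = qfact q k * qnum q (k + 1) :=
  prod_range_succ _ _

lemma qfact_add (c k : ℕ) : qfact q (c + k) = qfact q c * qpoch q (c + 1) k := by
  simp only [qfact, qpoch, prod_range_add, Nat.cast_add]
  congr 1
  exact prod_congr rfl fun m _ => by congr 1; ring

lemma qpoch_natCast_add_one (hq0 : 0 < q) (hq1 : q ≠ 1) (c k : ℕ) :
    qpoch q ((c : ℝ) + 1) k = qfact q (c + k) / qfact q c := by
  rw [qfact_add, mul_div_cancel_left₀ _ (qfact_pos hq0 hq1 c).ne']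

lemma qpoch_neg_natCast (hq0 : 0 < q) (hq1 : q ≠ 1) {c k : ℕ} (h : k ≤ c) :
    qpoch q (-(c : ℝ)) k = (-1) ^ k * qfact q c / qfact q (c - k) := by
  rw [qpoch_reflect, show 1 - -(c : ℝ) - k = ((c - k : ℕ) : ℝ) + 1 by push_cast [h]; ring,
    qpoch_natCast_add_one hq0 hq1, Nat.sub_add_cancel h, mul_div_assoc]

lemma qpoch_one_sub_natCast_ne_zero (hq0 : 0 < q) (hq1 : q ≠ 1) {c k : ℕ} (x : ℝ) (hx : 0 ≤ x)
    (h : k < c) : qpoch q (1 - c - x) k ≠ 0 :=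
  qpoch_ne_zero_of_nonpos hq0 hq1 <| by
    have : (k : ℝ) + 1 ≤ c := by exact_mod_cast h
    linarith

lemma qpoch_one_sub_natCast (hq0 : 0 < q) (hq1 : q ≠ 1) {c k : ℕ} (h : k < c) :
    qpoch q (1 - c) k = (-1) ^ k * qfact q (c - 1) / qfact q (c - 1 - k) := by
  rw [← qpoch_neg_natCast hq0 hq1 (by omega : k ≤ c - 1)]
  push_cast [show 1 ≤ c by omega]
  congr 1
  ring

noncomputable def saalschutzTerm (q x y v : ℝ) (n k : ℕ) : ℝ :=
  qpoch q (-(n : ℝ)) k * qpoch q x k * qpoch q y k * qpoch q (v + k) (n - k) *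
    qpoch q (x + y - n + 1 - v + k) (n - k) / qfact q k

/-- The Zeilberger certificate of the q-Saalschütz sum in `n`. -/
noncomputable def saalschutzCert (q x y v : ℝ) (n k : ℕ) : ℝ :=
  -(qnum q k * qpoch q (-(n : ℝ) - 1) k * qpoch q x k * qpoch q y k *
      qpoch q (v - 1 + k) (n + 1 - k) * qpoch q (x + y - n - v + k) (n + 1 - k)) /
    (qfact q k * qnum q (n + 1))

lemma saalschutzCert_zero (x y v : ℝ) (n : ℕ) : saalschutzCert q x y v n 0 = 0 := by
  simp [saalschutzCert]

lemma saalschutzTerm_succ (hq0 : 0 < q) (hq1 : q ≠ 1) {x y v : ℝ} {n k : ℕ} (hk : k ≤ n) :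
    saalschutzTerm q x y v (n + 1) k =
      saalschutzCert q x y v n (k + 1) - saalschutzCert q x y v n k -
        qnum q (v - x + n) * qnum q (v - y + n) * saalschutzTerm q x y v n k := by
  have hF : qfact q k ≠ 0 := (qfact_pos hq0 hq1 k).ne'
  have hn : qnum q (n + 1) ≠ 0 := qnum_ne_zero hq0 hq1 (by positivity)
  have hk1 : qnum q (k + 1) ≠ 0 := qnum_ne_zero hq0 hq1 (by positivity)
  set P := qpoch q (-(n : ℝ) - 1) k * qpoch q x k * qpoch q y k * qpoch q (v + k) (n - k) *
    qpoch q (x + y - n + 1 - v + k) (n - k) with hP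
  set D := qfact q k * qnum q (n + 1) with hD
  have e1 : saalschutzTerm q x y v (n + 1) k =
      qnum q (n + 1) * qnum q (v + n) * qnum q (x + y - n - v + k) * P / D := by
    rw [saalschutzTerm, show n + 1 - k = n - k + 1 by omega, qpoch_succ, qpoch_succ', hP, hD]
    push_cast [hk]
    field_simp
    ring_nf
  have e2 : saalschutzCert q x y v n (k + 1) =
      qnum q (n + 1 - k) * qnum q (x + k) * qnum q (y + k) * P / D := by
    rw [saalschutzCert, show n + 1 - (k + 1) = n - k by omega, qpoch_succ, qpoch_succ, qpoch_succ,
      qfact_succ, show -(n : ℝ) - 1 + k = -(n + 1 - k) by ring, qnum_neg, hP, hD]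
    push_cast
    field_simp
    ring_nf
  have e3 : saalschutzCert q x y v n k =
      -(qnum q k * qnum q (v - 1 + k) * qnum q (x + y - n - v + k)) * P / D := by
    rw [saalschutzCert, show n + 1 - k = n - k + 1 by omega, qpoch_succ', qpoch_succ', hP, hD]
    ring_nf
  have e4 : saalschutzTerm q x y v n k = qnum q (n + 1 - k) * P / D := by
    have h₁ : qnum q (-(n : ℝ) - 1) = -qnum q (n + 1) := by rw [← qnum_neg]; congr 1; ring
    have h₂ : qnum q (-(n : ℝ) - 1 + k) = -qnum q (n + 1 - k) := by rw [← qnum_neg]; congr 1; ring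
    have h := (qpoch_succ (q := q) (-(n : ℝ) - 1) k).symm.trans (qpoch_succ' _ k)
    rw [h₁, h₂, show -(n : ℝ) - 1 + 1 = -n by ring] at h
    rw [saalschutzTerm, eq_div_iff (mul_ne_zero hF hn), hP]
    field_simp
    linear_combination (qpoch q x k * qpoch q y k * qpoch q (v + k) (n - k) *
      qpoch q (x + y - n + 1 - v + k) (n - k)) * h
  rw [e1, e2, e3, e4]
  linear_combination P / D * qnum_four_term hq0 x y v n k

lemma saalschutzTerm_succ_self (hq0 : 0 < q) (hq1 : q ≠ 1) (x y v : ℝ) (n : ℕ) :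
    saalschutzTerm q x y v (n + 1) (n + 1) = -saalschutzCert q x y v n (n + 1) := by
  have hn : qnum q (n + 1) ≠ 0 := qnum_ne_zero hq0 hq1 (by positivity)
  have hF : qfact q n ≠ 0 := (qfact_pos hq0 hq1 n).ne'
  simp only [saalschutzTerm, saalschutzCert, Nat.sub_self, qpoch_zero, qfact_succ]
  push_cast
  field_simp
  ring_nf

theorem sum_saalschutzTerm (hq0 : 0 < q) (hq1 : q ≠ 1) (x y v : ℝ) (n : ℕ) :
    ∑ k ∈ range (n + 1), saalschutzTerm q x y v n k =
      (-1) ^ n * (qpoch q (v - x) n * qpoch q (v - y) n) := by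
  induction n with
  | zero => simp [saalschutzTerm, qfact_eq_qpoch_one]
  | succ n ih =>
    rw [sum_range_succ,
      sum_congr rfl fun k hk => saalschutzTerm_succ hq0 hq1 (mem_range_succ_iff.1 hk),
      sum_sub_distrib, sum_range_sub, ← mul_sum, ih, saalschutzCert_zero,
      saalschutzTerm_succ_self hq0 hq1, qpoch_succ, qpoch_succ]
    ring

/-- `(b₁)_t (b₂)_t (b₃)_t` times the terminating series `₄φ₃(-t, a₁, a₂, a₃; b₁, b₂, b₃)`;
cleared of denominators, it stays meaningful when some `bᵢ` is a nonpositive integer. -/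
noncomputable def clearedPhi43 (q : ℝ) (t : ℕ) (a₁ a₂ a₃ b₁ b₂ b₃ : ℝ) : ℝ :=
  ∑ k ∈ range (t + 1), qpoch q (-(t : ℝ)) k * qpoch q a₁ k * qpoch q a₂ k * qpoch q a₃ k *
    qpoch q (b₁ + k) (t - k) * qpoch q (b₂ + k) (t - k) * qpoch q (b₃ + k) (t - k) / qfact q k

lemma qpoch_eq_mul_qpoch_of_le (a : ℝ) {k t : ℕ} (h : k ≤ t) :
    qpoch q a t = qpoch q a k * qpoch q (a + k) (t - k) := by
  rw [← qpoch_add, Nat.add_sub_cancel' h]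

-- The term of the double sum obtained by expanding `(b₁ - a₂)_k (b₁ - a₃)_k` with q-Saalschütz,
-- re-indexed by `k = j + i`, factors as a term in `j` times a q-Saalschütz term in `i`.
lemma sears_summand_factor (hq0 : 0 < q) (hq1 : q ≠ 1) (a₁ a₂ a₃ b₁ b₂ : ℝ) {t j i : ℕ}
    (h : j + i ≤ t) :
    qpoch q (-(t : ℝ)) (j + i) * qpoch q a₁ (j + i) * qpoch q (b₁ + (j + i : ℕ)) (t - (j + i)) *
        qpoch q (a₁ + 1 - t - b₂ + (j + i : ℕ)) (t - (j + i)) *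
        qpoch q (b₁ + b₂ - a₂ - a₃ + (j + i : ℕ)) (t - (j + i)) / qfact q (j + i) *
        ((-1) ^ (j + i) * saalschutzTerm q a₂ a₃ b₁ (j + i) j) =
      qpoch q (-(t : ℝ)) j * qpoch q a₁ j * qpoch q a₂ j * qpoch q a₃ j *
          qpoch q (b₁ + j) (t - j) / qfact q j *
        saalschutzTerm q (a₁ + j) (b₁ - a₂ - a₃) (a₁ + 1 - t - b₂ + j) (t - j) i := by
  have hFi : qfact q i ≠ 0 := (qfact_pos hq0 hq1 i).ne'
  have hFji : qfact q (j + i) ≠ 0 := (qfact_pos hq0 hq1 (j + i)).ne'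
  have hneg : qpoch q (-((j + i : ℕ) : ℝ)) j = (-1) ^ j * qfact q (j + i) / qfact q i := by
    rw [qpoch_neg_natCast hq0 hq1 (Nat.le_add_right j i), Nat.add_sub_cancel_left]
  simp only [saalschutzTerm]
  rw [hneg, Nat.add_sub_cancel_left, qpoch_add (-(t : ℝ)), qpoch_add a₁,
    qpoch_eq_mul_qpoch_of_le (b₁ + j) (show i ≤ t - j by omega),
    qpoch_reflect (a₂ + a₃ - ((j + i : ℕ) : ℝ) + 1 - b₁ + j) i, ← Nat.sub_sub, pow_add]
  push_cast [Nat.cast_sub (show j ≤ t by omega)]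
  obtain hj | hj := neg_one_pow_eq_or ℝ j <;> obtain hi | hi := neg_one_pow_eq_or ℝ i <;>
    simp only [hj, hi] <;> field_simp <;> ring_nf

theorem clearedPhi43_sears (hq0 : 0 < q) (hq1 : q ≠ 1) {t : ℕ} {a₁ a₂ a₃ b₁ b₂ b₃ : ℝ}
    (hbal : a₁ + a₂ + a₃ + 1 = t + b₁ + b₂ + b₃) :
    clearedPhi43 q t a₁ a₂ a₃ b₁ b₂ b₃ =
      clearedPhi43 q t a₁ (b₁ - a₂) (b₁ - a₃) b₁ (a₁ + 1 - t - b₂) (b₁ + b₂ - a₂ - a₃) := by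
  set F : ℕ → ℕ → ℝ := fun k j =>
    qpoch q (-(t : ℝ)) k * qpoch q a₁ k * qpoch q (b₁ + k) (t - k) *
      qpoch q (a₁ + 1 - t - b₂ + k) (t - k) * qpoch q (b₁ + b₂ - a₂ - a₃ + k) (t - k) / qfact q k *
      ((-1) ^ k * saalschutzTerm q a₂ a₃ b₁ k j) with hF
  have expand : ∀ k, qpoch q (b₁ - a₂) k * qpoch q (b₁ - a₃) k =
      (-1) ^ k * ∑ j ∈ range (k + 1), saalschutzTerm q a₂ a₃ b₁ k j := by
    intro k
    rw [sum_saalschutzTerm hq0 hq1, ← mul_assoc, ← pow_add, Even.neg_one_pow ⟨k, rfl⟩, one_mul]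
  have lhs : clearedPhi43 q t a₁ a₂ a₃ b₁ b₂ b₃ = ∑ j ∈ range (t + 1),
      qpoch q (-(t : ℝ)) j * qpoch q a₁ j * qpoch q a₂ j * qpoch q a₃ j *
          qpoch q (b₁ + j) (t - j) / qfact q j *
        ∑ i ∈ range (t - j + 1),
          saalschutzTerm q (a₁ + j) (b₁ - a₂ - a₃) (a₁ + 1 - t - b₂ + j) (t - j) i := by
    refine sum_congr rfl fun j hj => ?_
    have hjt : j ≤ t := mem_range_succ_iff.1 hj
    rw [sum_saalschutzTerm hq0 hq1, qpoch_reflect (a₁ + 1 - t - b₂ + j - (a₁ + j))]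
    have e₁ : 1 - (a₁ + 1 - t - b₂ + j - (a₁ + j)) - ((t - j : ℕ) : ℝ) = b₂ + j := by
      push_cast [hjt]; ring
    have e₂ : a₁ + 1 - t - b₂ + j - (b₁ - a₂ - a₃) = b₃ + j := by linarith
    rw [e₁, e₂]
    obtain h | h := neg_one_pow_eq_or ℝ (t - j) <;> rw [h] <;> ring
  have rhs : clearedPhi43 q t a₁ (b₁ - a₂) (b₁ - a₃) b₁ (a₁ + 1 - t - b₂) (b₁ + b₂ - a₂ - a₃) =
      ∑ k ∈ range (t + 1), ∑ j ∈ range (k + 1), F (j + (k - j)) j := by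
    refine sum_congr rfl fun k _ => ?_
    rw [sum_congr rfl fun j hj => by rw [Nat.add_sub_cancel' (mem_range_succ_iff.1 hj)], hF,
      ← mul_sum, ← mul_sum, ← expand]
    ring
  rw [lhs, rhs, sum_range_diag_flip (f := fun j i => F (j + i) j)]
  refine sum_congr rfl fun j hj => ?_
  have hjt := mem_range_succ_iff.1 hj
  rw [show t + 1 - j = t - j + 1 by omega, mul_sum]
  refine sum_congr rfl fun i hi => ?_
  have hit := mem_range_succ_iff.1 hi
  rw [hF]
  exact (sears_summand_factor hq0 hq1 a₁ a₂ a₃ b₁ b₂ (t := t) (j := j) (i := i) (by omega)).symm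

lemma sum_range_succ_eq_of_eq_zero {M : Type*} [AddCommMonoid M] {f : ℕ → M} {m t : ℕ}
    (hm : ∀ k, m < k → f k = 0) (ht : ∀ k, t < k → f k = 0) :
    ∑ k ∈ range (m + 1), f k = ∑ k ∈ range (t + 1), f k := by
  rcases le_total m t with h | h
  · exact sum_subset (range_subset_range.2 (by omega)) fun k hk hk' =>
      hm k (by simp only [mem_range] at hk hk'; omega)
  · exact (sum_subset (range_subset_range.2 (by omega)) fun k hk hk' =>
      ht k (by simp only [mem_range] at hk hk'; omega)).symm

lemma sum_eq_clearedPhi43 {m t : ℕ} (a₂ a₄ : ℝ) {b₁ b₂ b₃ : ℝ}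
    (h₁ : qpoch q b₁ t ≠ 0) (h₂ : qpoch q b₂ t ≠ 0) (h₃ : qpoch q b₃ t ≠ 0) :
    ∑ k ∈ range (m + 1), qpoch q (-(m : ℝ)) k * qpoch q a₂ k * qpoch q (-(t : ℝ)) k *
        qpoch q a₄ k / (qpoch q 1 k * qpoch q b₁ k * qpoch q b₂ k * qpoch q b₃ k) =
      clearedPhi43 q t a₄ (-m) a₂ b₁ b₂ b₃ / (qpoch q b₁ t * qpoch q b₂ t * qpoch q b₃ t) := by
  rw [sum_range_succ_eq_of_eq_zero (t := t)
      (fun k hk => by rw [qpoch_neg_natCast_eq_zero hk]; ring)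
      (fun k hk => by rw [qpoch_neg_natCast_eq_zero hk]; ring),
    clearedPhi43, sum_div]
  refine sum_congr rfl fun k hk => ?_
  have hkt := mem_range_succ_iff.1 hk
  rw [qpoch_eq_mul_qpoch_of_le b₁ hkt] at h₁ ⊢
  rw [qpoch_eq_mul_qpoch_of_le b₂ hkt] at h₂ ⊢
  rw [qpoch_eq_mul_qpoch_of_le b₃ hkt] at h₃ ⊢
  obtain ⟨-, h₁⟩ := mul_ne_zero_iff.1 h₁
  obtain ⟨-, h₂⟩ := mul_ne_zero_iff.1 h₂
  obtain ⟨-, h₃⟩ := mul_ne_zero_iff.1 h₃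
  rw [← qfact_eq_qpoch_one]
  field_simp

lemma racahU_eq_clearedPhi43 (hq0 : 0 < q) (hq1 : q ≠ 1) {A N α β n t : ℕ} (ht : t < N) :
    racahU q (A / 2) (A / 2 + N) α β n (A / 2 + t) =
      qpoch q (1 - N) n * qpoch q (β + 1) n * qpoch q (A + N + α + 1) n / qfact q n *
        (clearedPhi43 q t (A + t + 1) (-n) (α + β + n + 1) (1 - N) (β + 1) (A + N + α + 1) /
          (qpoch q (1 - N) t * qpoch q (β + 1) t * qpoch q (A + N + α + 1) t)) := by
  have h₁ : qpoch q (1 - N) t ≠ 0 := by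
    simpa using qpoch_one_sub_natCast_ne_zero hq0 hq1 0 le_rfl ht
  rw [racahU, show (A : ℝ) / 2 - (A / 2 + N) + 1 = 1 - N by ring,
    show (A : ℝ) / 2 + (A / 2 + N) + α + 1 = A + N + α + 1 by ring,
    show (A : ℝ) / 2 - (A / 2 + t) = -t by ring,
    show (A : ℝ) / 2 + (A / 2 + t) + 1 = A + t + 1 by ring,
    sum_eq_clearedPhi43 _ _ h₁ (qpoch_pos hq0 hq1 (by positivity) t).ne'
      (qpoch_pos hq0 hq1 (by positivity) t).ne']

lemma racahUt_eq_clearedPhi43 (hq0 : 0 < q) (hq1 : q ≠ 1) {A N α β m t : ℕ} (hβ : β ≤ A)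
    (ht : t < N) :
    racahUt q (A / 2) (A / 2 + N) α β m (A / 2 + t) =
      qpoch q (1 - N) m * qpoch q (A - β + 1) m * qpoch q (1 - N - α) m / qfact q m *
        (clearedPhi43 q t (A + t + 1) (-m) (m + 1 - 2 * N - α - β) (1 - N) (A - β + 1)
            (1 - N - α) /
          (qpoch q (1 - N) t * qpoch q (A - β + 1) t * qpoch q (1 - N - α) t)) := by
  have h₁ : qpoch q (1 - N) t ≠ 0 := by
    simpa using qpoch_one_sub_natCast_ne_zero hq0 hq1 0 le_rfl ht
  have hAβ : (0 : ℝ) < A - β + 1 := by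
    have : (β : ℝ) ≤ A := by exact_mod_cast hβ
    linarith
  rw [racahUt, show (A : ℝ) / 2 - (A / 2 + N) + 1 = 1 - N by ring,
    show 2 * ((A : ℝ) / 2) - β + 1 = A - β + 1 by ring,
    show (A : ℝ) / 2 - (A / 2 + N) - α + 1 = 1 - N - α by ring,
    show 2 * ((A : ℝ) / 2) - 2 * (A / 2 + N) - α - β + m + 1 = m + 1 - 2 * N - α - β by ring,
    show (A : ℝ) / 2 - (A / 2 + t) = -t by ring,
    show (A : ℝ) / 2 + (A / 2 + t) + 1 = A + t + 1 by ring,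
    sum_eq_clearedPhi43 _ _ h₁ (qpoch_pos hq0 hq1 hAβ t).ne'
      (qpoch_one_sub_natCast_ne_zero hq0 hq1 _ (Nat.cast_nonneg α) ht)]

lemma racahUt_sub_one_sub_eq_clearedPhi43 (hq0 : 0 < q) (hq1 : q ≠ 1) {A N α β n t : ℕ}
    (hβ : β ≤ A) (hn : n < N) (ht : t < N) :
    racahUt q (A / 2) (A / 2 + N) α β (N - 1 - n) (A / 2 + t) =
      qpoch q (1 - N) (N - 1 - n) * qpoch q (A - β + 1) (N - 1 - n) *
          qpoch q (1 - N - α) (N - 1 - n) / qfact q (N - 1 - n) *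
        (clearedPhi43 q t (A + t + 1) (-n) (α + β + n + 1) (1 - N) (β + 1) (A + N + α + 1) /
          (qpoch q (1 - N) t * qpoch q (A - β + 1) t * qpoch q (1 - N - α) t)) := by
  have hm : ((N - 1 - n : ℕ) : ℝ) = N - 1 - n := by
    rw [Nat.cast_sub (by omega : n ≤ N - 1), Nat.cast_sub (by omega : 1 ≤ N), Nat.cast_one]
  rw [racahUt_eq_clearedPhi43 hq0 hq1 hβ ht, clearedPhi43_sears hq0 hq1 (by ring), hm]
  congr 3 <;> ring

end

theorem stmt_17_general (q : ℝ) (hq0 : 0 < q) (hq1 : q ≠ 1) (A N α β : ℕ) (hβ : β ≤ A)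
    (n t : ℕ) (hn : n < N) (ht : t < N) :
    racahUt q ((A : ℝ) / 2) ((A : ℝ) / 2 + N) (α : ℝ) (β : ℝ) (N - 1 - n)
        ((A : ℝ) / 2 + t) =
      (-1 : ℝ) ^ ((t : ℤ) - (n : ℤ)) *
        (qfact q (t + β) * qfact q (N + α - t - 1) * qfact q (A + N + α + t) *
            qfact q (A + N - β - n - 1) /
          (qfact q (A - β + t) * qfact q (α + n) * qfact q (β + n) *
            qfact q (A + N + α + n))) *
        racahU q ((A : ℝ) / 2) ((A : ℝ) / 2 + N) (α : ℝ) (β : ℝ) n ((A : ℝ) / 2 + t) := by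
  rw [racahUt_sub_one_sub_eq_clearedPhi43 hq0 hq1 hβ hn ht, racahU_eq_clearedPhi43 hq0 hq1 ht]
  generalize clearedPhi43 q t _ _ _ _ _ _ = S
  rw [show (1 : ℝ) - N - α = 1 - ((N + α : ℕ) : ℝ) by push_cast; ring,
    show (A : ℝ) - β + 1 = ((A - β : ℕ) : ℝ) + 1 by push_cast [hβ]; ring,
    show (A : ℝ) + N + α + 1 = ((A + N + α : ℕ) : ℝ) + 1 by push_cast; ring]
  simp only [qpoch_natCast_add_one hq0 hq1]
  rw [qpoch_one_sub_natCast hq0 hq1 (show N - 1 - n < N by omega),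
    qpoch_one_sub_natCast hq0 hq1 ht, qpoch_one_sub_natCast hq0 hq1 hn,
    qpoch_one_sub_natCast hq0 hq1 (show N - 1 - n < N + α by omega),
    qpoch_one_sub_natCast hq0 hq1 (show t < N + α by omega),
    show N - 1 - (N - 1 - n) = n by omega, show A - β + (N - 1 - n) = A + N - β - n - 1 by omega,
    show N + α - 1 - (N - 1 - n) = α + n by omega, show N + α - 1 - t = N + α - t - 1 by omega,
    show β + t = t + β by omega]
  have hF : ∀ k, qfact q k ≠ 0 := fun k => (qfact_pos hq0 hq1 k).ne'
  rw [zpow_sub₀ (by norm_num), zpow_natCast, zpow_natCast]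
  field_simp [hF]
  ring_nf
  -- only squares of signs are left
  simp only [pow_mul', neg_one_sq, one_pow, mul_one]

theorem stmt_17 (q : ℝ) (hq0 : 0 < q) (hq1 : q ≠ 1) (A N α β : ℕ) (hN : 1 ≤ N) (hβ : β ≤ A)
    (n t : ℕ) (hn : n < N) (ht : t < N) :
    racahUt q ((A : ℝ) / 2) ((A : ℝ) / 2 + N) (α : ℝ) (β : ℝ) (N - 1 - n)
        ((A : ℝ) / 2 + t) =
      (-1 : ℝ) ^ ((t : ℤ) - (n : ℤ)) *
        (qfact q (t + β) * qfact q (N + α - t - 1) * qfact q (A + N + α + t) *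
            qfact q (A + N - β - n - 1) /
          (qfact q (A - β + t) * qfact q (α + n) * qfact q (β + n) *
            qfact q (A + N + α + n))) *
        racahU q ((A : ℝ) / 2) ((A : ℝ) / 2 + N) (α : ℝ) (β : ℝ) n ((A : ℝ) / 2 + t) :=
  stmt_17_general q hq0 hq1 A N α β hβ n t hn ht
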